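/- arXiv:1905.00623 — 4 statements merged into one kernel-verified Lean document; each statement's English description precedes it below -/
import Mathlib

section
/- Let d ≥ 1 and let K : ℝ^d → [0,∞] be a measurable even kernel (K(x) = K(−x) for a.e. x) with ∫_{ℝ^d} min(1,|x|) K(x) dx < ∞. Given a unit vector n̂ ∈ S^{d−1}, define ζ(x,y) := sign((y−x)·n̂) and H := {x ∈ ℝ^d : x·n̂ > 0}. Then ζ is a nonlocal calibration for χ_H. -/
open MeasureTheory ENNReal Topology Filter RealInnerProductSpace

/-- Euclidean space `ℝ^d`. -/
abbrev Ed (d : ℕ) := EuclideanSpace ℝ (Fin d)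

/-- The nonlocal energy
`J_K(u；Ω) = (1/2)∫_Ω∫_Ω K(y−x)|u(y)−u(x)| dy dx + ∫_Ω∫_{Ω^c} K(y−x)|u(y)−u(x)| dy dx`. -/
noncomputable def JK {d : ℕ} (K : Ed d → ℝ≥0∞) (u : Ed d → ℝ) (Ω : Set (Ed d)) : ℝ≥0∞ :=
  (1 / 2) * ∫⁻ x in Ω, ∫⁻ y in Ω, K (y - x) * ENNReal.ofReal |u y - u x| +
    ∫⁻ x in Ω, ∫⁻ y in Ωᶜ, K (y - x) * ENNReal.ofReal |u y - u x|

/-- `ζ` is a nonlocal calibration for `u` (w.r.t. the kernel `K`): it is measurable,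
bounded by `1` a.e., it has vanishing nonlocal divergence, and it agrees with the sign of the
increments of `u`. -/
def IsCalibration {d : ℕ} (K : Ed d → ℝ≥0∞) (u : Ed d → ℝ) (ζ : Ed d × Ed d → ℝ) : Prop :=
  Measurable ζ ∧
  (∀ᵐ p ∂(volume : Measure (Ed d × Ed d)), |ζ p| ≤ 1) ∧
  (∀ᵐ x ∂(volume : Measure (Ed d)),
    Tendsto (fun r : ℝ =>
        ∫ y in (Metric.ball x r)ᶜ, (K (y - x)).toReal * (ζ (y, x) - ζ (x, y)))
      (𝓝[>] 0) (𝓝 0)) ∧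
  (∀ᵐ p ∂(volume : Measure (Ed d × Ed d)),
    u p.1 ≠ u p.2 → ζ p * (u p.2 - u p.1) = |u p.2 - u p.1|)

/-!
The sign condition holds pointwise: `χ_H` can only jump up where `⟪·, n⟫` increases and down
where it decreases. The truncated divergence even vanishes for every `r`, and for any field of
the form `ζ(x, y) = φ(y - x)`: the point reflection `y ↦ 2x - y` preserves `B(x, r)ᶜ` and, since
`K` is even, turns the integrand `K(y - x) (φ(x - y) - φ(y - x))` into its negative.
-/

namespace Real

theorem monotone_sign : Monotone sign := by
  intro a b hab
  rcases lt_trichotomy a 0 with ha | rfl | ha <;> rcases lt_trichotomy b 0 with hb | rfl | hb <;>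
    simp only [sign_of_neg, sign_of_pos, sign_zero, *] <;> norm_num <;> linarith

@[fun_prop]
theorem measurable_sign : Measurable sign :=
  monotone_sign.measurable

theorem abs_sign_le_one (r : ℝ) : |sign r| ≤ 1 := by
  rcases sign_apply_eq r with h | h | h <;> simp [h]

theorem sign_sub_mul_indicator_sub {α : Type*} (g : α → ℝ) (x y : α) :
    let u := {z | 0 < g z}.indicator fun _ => (1 : ℝ)
    sign (g y - g x) * (u y - u x) = |u y - u x| := by
  by_cases hx : 0 < g x <;> by_cases hy : 0 < g y
  · simp [hx, hy]
  · rw [sign_of_neg (by linarith)]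
    simp [hx, hy]
  · rw [sign_of_pos (by linarith)]
    simp [hx, hy]
  · simp [hx, hy]

end Real

theorem MeasureTheory.MeasurePreserving.setIntegral_eq_zero_of_ae_odd {α : Type*}
    [MeasurableSpace α] {μ : Measure α} {T : α → α}
    (hT : MeasurePreserving T μ μ) (hTe : MeasurableEmbedding T) {s : Set α} (hs : T ⁻¹' s = s)
    {f : α → ℝ} (hodd : ∀ᵐ y ∂μ, f (T y) = -f y) :
    ∫ y in s, f y ∂μ = 0 := by
  have h : ∫ y in s, f y ∂μ = -∫ y in s, f y ∂μ := calc
    ∫ y in s, f y ∂μ = ∫ y in s, f (T y) ∂μ := by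
      rw [← hT.setIntegral_preimage_emb hTe f s, hs]
    _ = ∫ y in s, -f y ∂μ := integral_congr_ae (ae_restrict_of_ae hodd)
    _ = -∫ y in s, f y ∂μ := integral_neg f
  linarith

theorem setIntegral_compl_ball_even_kernel_mul_sub_eq_zero {E : Type*} [NormedAddCommGroup E]
    [MeasurableSpace E] [BorelSpace E] {μ : Measure E} [μ.IsAddLeftInvariant] [μ.IsNegInvariant]
    {K : E → ℝ≥0∞} (hK : ∀ᵐ z ∂μ, K (-z) = K z) (φ : E → ℝ) (x : E) (r : ℝ) :
    ∫ y in (Metric.ball x r)ᶜ, (K (y - x)).toReal * (φ (x - y) - φ (y - x)) ∂μ = 0 := by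
  refine (Measure.measurePreserving_sub_left μ (x + x)).setIntegral_eq_zero_of_ae_odd
    (MeasurableEquiv.subLeft (x + x)).measurableEmbedding ?_ ?_
  · ext y
    simp only [Set.mem_preimage, Set.mem_compl_iff, Metric.mem_ball, dist_eq_norm,
      show x + x - y - x = -(y - x) by abel, norm_neg]
  · filter_upwards [(measurePreserving_sub_right μ x).quasiMeasurePreserving.ae hK] with y hy
    rw [show x + x - y - x = -(y - x) by abel, show x - (x + x - y) = y - x by abel, hy,
      neg_sub]
    ring

theorem sign_is_calibration_for_halfspace_general
    {d : ℕ}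
    (K : Ed d → ℝ≥0∞)
    (hKeven : ∀ᵐ x ∂(volume : Measure (Ed d)), K (-x) = K x)
    (n : Ed d) :
    IsCalibration K
      ({x : Ed d | 0 < ⟪x, n⟫}.indicator (fun _ => (1 : ℝ)))
      (fun p : Ed d × Ed d => Real.sign ⟪p.2 - p.1, n⟫) := by
  refine ⟨by fun_prop, ae_of_all _ fun _ => Real.abs_sign_le_one _, ae_of_all _ fun x => ?_,
    ae_of_all _ fun p _ => ?_⟩
  · simp_rw [setIntegral_compl_ball_even_kernel_mul_sub_eq_zero hKeven (fun z => Real.sign ⟪z, n⟫)]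
    exact tendsto_const_nhds
  · simpa only [inner_sub_left] using Real.sign_sub_mul_indicator_sub (⟪·, n⟫) p.1 p.2

/-- The field `ζ(x,y) = sign((y−x)·n̂)` is a nonlocal calibration for the halfspace
`H = {x : x·n̂ > 0}`. -/
theorem sign_is_calibration_for_halfspace
    {d : ℕ} (hd : 1 ≤ d)
    (K : Ed d → ℝ≥0∞) (hKmeas : Measurable K)
    (hKeven : ∀ᵐ x ∂(volume : Measure (Ed d)), K (-x) = K x)
    (hKsum : (∫⁻ x : Ed d, ENNReal.ofReal (min 1 ‖x‖) * K x) < ⊤)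
    (n : Ed d) (hn : ‖n‖ = 1) :
    IsCalibration K
      ({x : Ed d | 0 < ⟪x, n⟫}.indicator (fun _ => (1 : ℝ)))
      (fun p : Ed d × Ed d => Real.sign ⟪p.2 - p.1, n⟫) :=
  sign_is_calibration_for_halfspace_general K hKeven n
end

section
/- Let d ≥ 1, let Ω ⊂ ℝ^d be Lebesgue measurable, and let K : ℝ^d → [0,∞] be a measurable kernel. For every measurable function u : ℝ^d → [0,1], the coarea-type formula J_K(u;Ω) = ∫₀¹ Per_K({x : u(x) > t}; Ω) dt holds. -/
open MeasureTheory ENNReal Topology RealInnerProductSpace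

/-- The nonlocal perimeter `Per_K(E；Ω) := J_K(χ_E；Ω)`. -/
noncomputable def PerK {d : ℕ} (K : Ed d → ℝ≥0∞) (E : Set (Ed d)) (Ω : Set (Ed d)) : ℝ≥0∞ :=
  JK K (E.indicator (fun _ => (1 : ℝ))) Ω

/-!
For `a, b ∈ [α, β]` the indicators of `{t < a}` and `{t < b}` differ exactly on the interval
between `a` and `b`, so `∫_α^β |χ_{t<b} − χ_{t<a}| dt = |b − a|`. Applying this with
`a = u x`, `b = u y` inside the double integrals and exchanging the `t`-integral with them
(Tonelli) turns the integral over `t` of the energies of the level sets into the energy of `u`.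
-/

open Set

lemma ofReal_abs_ite_lt_sub_ite_lt (a b t : ℝ) :
    ENNReal.ofReal |(if t < b then (1 : ℝ) else 0) - (if t < a then 1 else 0)| =
      (Ico (min a b) (max a b)).indicator 1 t := by
  by_cases ha : t < a <;> by_cases hb : t < b <;> simp [ha, hb, indicator_apply]

lemma lintegral_Ioo_ofReal_abs_ite_lt_sub_ite_lt {α β a b : ℝ} (ha : a ∈ Icc α β)
    (hb : b ∈ Icc α β) :
    ∫⁻ t in Ioo α β, ENNReal.ofReal |(if t < b then (1 : ℝ) else 0) - (if t < a then 1 else 0)| =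
      ENNReal.ofReal |b - a| := by
  have hsub : Ico (min a b) (max a b) ⊆ Icc α β :=
    Ico_subset_Icc_self.trans (Icc_subset_Icc (le_min ha.1 hb.1) (max_le ha.2 hb.2))
  simp_rw [ofReal_abs_ite_lt_sub_ite_lt, Measure.restrict_congr_set Ioo_ae_eq_Icc]
  rw [lintegral_indicator_one measurableSet_Ico, Measure.restrict_apply measurableSet_Ico,
    inter_eq_left.2 hsub, Real.volume_Ico, max_sub_min_eq_abs]

section InteractionEnergy

variable {X : Type*} [MeasurableSpace X]

noncomputable def interactionEnergy (k : X → X → ℝ≥0∞) (u : X → ℝ) (μ ν : Measure X) : ℝ≥0∞ :=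
  ∫⁻ x, ∫⁻ y, k x y * ENNReal.ofReal |u y - u x| ∂ν ∂μ

variable {k : X → X → ℝ≥0∞} {u : X → ℝ} {μ ν : Measure X}

lemma interactionEnergy_indicator_setOf_lt (t : ℝ) :
    interactionEnergy k ({x | t < u x}.indicator fun _ => 1) μ ν =
      ∫⁻ x, ∫⁻ y, k x y *
        ENNReal.ofReal |(if t < u y then (1 : ℝ) else 0) - (if t < u x then 1 else 0)| ∂ν ∂μ := by
  simp only [interactionEnergy, indicator_apply, mem_ofPred_eq]

lemma measurable_levelSet_integrand (hk : Measurable (Function.uncurry k)) (hu : Measurable u) :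
    Measurable fun p : (ℝ × X) × X => k p.1.2 p.2 * ENNReal.ofReal
      |(if p.1.1 < u p.2 then (1 : ℝ) else 0) - (if p.1.1 < u p.1.2 then 1 else 0)| := by
  have hlt {f : (ℝ × X) × X → X} (hf : Measurable f) :
      Measurable fun p : (ℝ × X) × X => if p.1.1 < u (f p) then (1 : ℝ) else 0 :=
    Measurable.ite (measurableSet_lt measurable_fst.fst (hu.comp hf)) measurable_const
      measurable_const
  exact (hk.comp (measurable_fst.snd.prodMk measurable_snd)).mul
    (ENNReal.measurable_ofReal.comp ((hlt measurable_snd).sub (hlt measurable_fst.snd)).abs)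

lemma measurable_interactionEnergy_indicator_setOf_lt [SFinite μ] [SFinite ν]
    (hk : Measurable (Function.uncurry k)) (hu : Measurable u) :
    Measurable fun t => interactionEnergy k ({x | t < u x}.indicator fun _ => 1) μ ν := by
  simp only [interactionEnergy_indicator_setOf_lt]
  exact (measurable_levelSet_integrand hk hu).lintegral_prod_right'.lintegral_prod_right'

lemma lintegral_interactionEnergy_indicator_setOf_lt [SFinite μ] [SFinite ν] {α β : ℝ}
    (hk : Measurable (Function.uncurry k)) (hu : Measurable u) (hu_mem : ∀ x, u x ∈ Icc α β) :
    ∫⁻ t in Ioo α β, interactionEnergy k ({x | t < u x}.indicator fun _ => 1) μ ν =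
      interactionEnergy k u μ ν := by
  have hF := measurable_levelSet_integrand hk hu
  simp only [interactionEnergy_indicator_setOf_lt]
  rw [lintegral_lintegral_swap hF.lintegral_prod_right'.aemeasurable]
  refine lintegral_congr fun x => ?_
  rw [lintegral_lintegral_swap ?swap]
  case swap =>
    exact (hF.comp ((measurable_fst.prodMk measurable_const).prodMk measurable_snd)).aemeasurable
  refine lintegral_congr fun y => ?_
  rw [lintegral_const_mul _ ?meas, lintegral_Ioo_ofReal_abs_ite_lt_sub_ite_lt (hu_mem x) (hu_mem y)]
  case meas =>
    simp only [ofReal_abs_ite_lt_sub_ite_lt]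
    exact measurable_one.indicator measurableSet_Ico

end InteractionEnergy

/-- `∫⁻` extends as far to the right as possible, so in `JK` the second double integral is a
constant added inside the first one and is therefore weighted by `|Ω|²`. -/
lemma JK_eq_interactionEnergy {d : ℕ} (K : Ed d → ℝ≥0∞) (u : Ed d → ℝ) (Ω : Set (Ed d)) :
    JK K u Ω = 1 / 2 *
      (interactionEnergy (fun x y => K (y - x)) u (volume.restrict Ω) (volume.restrict Ω) +
        interactionEnergy (fun x y => K (y - x)) u (volume.restrict Ω) (volume.restrict Ωᶜ) *
          (volume Ω * volume Ω)) := by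
  simp only [JK, interactionEnergy, lintegral_add_right _ measurable_const, setLIntegral_const]
  ring

theorem JK_coarea_general
    {d : ℕ}
    (Ω : Set (Ed d))
    (K : Ed d → ℝ≥0∞) (hKmeas : Measurable K)
    (u : Ed d → ℝ) (humeas : Measurable u)
    (hu01 : ∀ x, u x ∈ Set.Icc (0 : ℝ) 1) :
    JK K u Ω = ∫⁻ t in Set.Ioo (0 : ℝ) 1, PerK K {x | t < u x} Ω := by
  have hk : Measurable (Function.uncurry fun x y : Ed d => K (y - x)) :=
    hKmeas.comp (measurable_snd.sub measurable_fst)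
  have hmeas (S : Set (Ed d)) := measurable_interactionEnergy_indicator_setOf_lt
    (μ := volume.restrict Ω) (ν := volume.restrict S) hk humeas
  simp only [PerK, JK_eq_interactionEnergy]
  rw [lintegral_const_mul' _ _ (by norm_num),
    lintegral_add_left (hmeas Ω), lintegral_mul_const _ (hmeas Ωᶜ),
    lintegral_interactionEnergy_indicator_setOf_lt hk humeas hu01,
    lintegral_interactionEnergy_indicator_setOf_lt hk humeas hu01]

/-- The coarea-type formula `J_K(u；Ω) = ∫₀¹ Per_K({u > t}；Ω) dt`. -/
theorem JK_coarea
    {d : ℕ} (hd : 1 ≤ d)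
    (Ω : Set (Ed d)) (hΩ : MeasurableSet Ω)
    (K : Ed d → ℝ≥0∞) (hKmeas : Measurable K)
    (u : Ed d → ℝ) (humeas : Measurable u)
    (hu01 : ∀ x, u x ∈ Set.Icc (0 : ℝ) 1) :
    JK K u Ω = ∫⁻ t in Set.Ioo (0 : ℝ) 1, PerK K {x | t < u x} Ω :=
  JK_coarea_general Ω K hKmeas u humeas hu01
end

section
/- Let d ≥ 1, let Ω ⊂ ℝ^d be Lebesgue measurable, and let K : ℝ^d → [0,∞] be a measurable kernel. If u : ℝ^d → [0,1] is measurable with J_K(u;Ω) < ∞, then there exists t* ∈ (0,1) such that Per_K({x : u(x) > t*}; Ω) ≤ J_K(u; Ω). -/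
open MeasureTheory ENNReal Topology RealInnerProductSpace

/-!
For `u` with values in `[0, 1]`, `|u y - u x| = ∫₀¹ |χ_{u > t}(y) - χ_{u > t}(x)| dt`. The energy
`J_K(u; Ω)` integrates `|u y - u x|` against a nonnegative weight, so by Tonelli
`∫₀¹ Per_K({u > t}; Ω) dt = J_K(u; Ω)`, and as `(0, 1)` has measure one, some level `t` has
perimeter at most this mean.
-/

section TripleTonelli

variable {α β γ : Type*} [MeasurableSpace α] [MeasurableSpace β] [MeasurableSpace γ]
  {μ : Measure α} {ν : Measure β} {ρ : Measure γ} [SFinite ν] [SFinite ρ]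
  {f : α → β → γ → ℝ≥0∞}

theorem Measurable.lintegral_lintegral_right
    (hf : Measurable fun p : α × β × γ => f p.1 p.2.1 p.2.2) :
    Measurable fun a => ∫⁻ b, ∫⁻ c, f a b c ∂ρ ∂ν :=
  (hf.comp (measurable_fst.fst.prodMk (measurable_fst.snd.prodMk measurable_snd))
    |>.lintegral_prod_right').lintegral_prod_right'

theorem lintegral_lintegral_lintegral_comm [SFinite μ]
    (hf : Measurable fun p : α × β × γ => f p.1 p.2.1 p.2.2) :
    ∫⁻ a, ∫⁻ b, ∫⁻ c, f a b c ∂ρ ∂ν ∂μ = ∫⁻ b, ∫⁻ c, ∫⁻ a, f a b c ∂μ ∂ρ ∂ν := by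
  have hab : Measurable fun p : α × β => ∫⁻ c, f p.1 p.2 c ∂ρ :=
    hf.comp (measurable_fst.fst.prodMk (measurable_fst.snd.prodMk measurable_snd))
      |>.lintegral_prod_right'
  rw [lintegral_lintegral_swap hab.aemeasurable]
  refine lintegral_congr fun b => lintegral_lintegral_swap ?_
  exact (hf.comp (measurable_fst.prodMk (measurable_const.prodMk measurable_snd))).aemeasurable

end TripleTonelli

open Set

section LayerCake

variable {α : Type*} (u : α → ℝ)

theorem ofReal_abs_indicator_superlevel_sub_eq_indicator_Ico (t : ℝ) (x y : α) :
    ENNReal.ofReal |{z | t < u z}.indicator (fun _ => (1 : ℝ)) y -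
        {z | t < u z}.indicator (fun _ => (1 : ℝ)) x| =
      (Ico (min (u x) (u y)) (max (u x) (u y))).indicator 1 t := by
  by_cases hx : t < u x <;> by_cases hy : t < u y <;>
    simp [indicator, hx, hy, not_lt.mp]

theorem measurable_ofReal_abs_indicator_superlevel_sub [MeasurableSpace α] (hu : Measurable u) :
    Measurable fun p : ℝ × α × α => ENNReal.ofReal
      |{z | p.1 < u z}.indicator (fun _ => (1 : ℝ)) p.2.2 -
        {z | p.1 < u z}.indicator (fun _ => (1 : ℝ)) p.2.1| := by
  have hlevel : ∀ g : ℝ × α × α → α, Measurable g →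
      Measurable fun p : ℝ × α × α => {z | p.1 < u z}.indicator (fun _ => (1 : ℝ)) (g p) :=
    fun g hg => measurable_const.indicator (measurableSet_lt measurable_fst (hu.comp hg))
  exact ((hlevel _ measurable_snd.snd).sub (hlevel _ measurable_snd.fst)).abs.ennreal_ofReal

theorem setLIntegral_Ioo_ofReal_abs_indicator_superlevel_sub (hu : ∀ z, u z ∈ Icc (0 : ℝ) 1)
    (x y : α) :
    ∫⁻ t in Ioo (0 : ℝ) 1, ENNReal.ofReal |{z | t < u z}.indicator (fun _ => (1 : ℝ)) y -
        {z | t < u z}.indicator (fun _ => (1 : ℝ)) x| =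
      ENNReal.ofReal |u y - u x| := by
  have hsub : Ico (min (u x) (u y)) (max (u x) (u y)) ⊆ Icc 0 1 := fun t ht =>
    ⟨(le_min (hu x).1 (hu y).1).trans ht.1, ht.2.le.trans (max_le (hu x).2 (hu y).2)⟩
  simp_rw [ofReal_abs_indicator_superlevel_sub_eq_indicator_Ico]
  rw [Measure.restrict_congr_set Ioo_ae_eq_Icc, lintegral_indicator_one measurableSet_Ico,
    Measure.restrict_apply measurableSet_Ico, inter_eq_left.mpr hsub, Real.volume_Ico,
    max_sub_min_eq_abs]

end LayerCake

section NonlocalEnergy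

variable {d : ℕ} (K : Ed d → ℝ≥0∞) (Ω : Set (Ed d))

/-- As parsed, the second summand of `JK` sits inside the first double integral, where it is a
constant. -/
theorem JK_eq (v : Ed d → ℝ) :
    JK K v Ω = 1 / 2 * ((∫⁻ x in Ω, ∫⁻ y in Ω, K (y - x) * ENNReal.ofReal |v y - v x|) +
      (∫⁻ x in Ω, ∫⁻ y in Ωᶜ, K (y - x) * ENNReal.ofReal |v y - v x|) * volume Ω * volume Ω) := by
  simp only [JK, lintegral_add_right _ measurable_const, lintegral_const,
    Measure.restrict_apply_univ]

variable {K} {v : ℝ → Ed d → ℝ}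

theorem measurable_doubleIntegral_kernel (hK : Measurable K)
    (hv : Measurable fun p : ℝ × Ed d × Ed d => ENNReal.ofReal |v p.1 p.2.2 - v p.1 p.2.1|)
    (S T : Set (Ed d)) :
    Measurable fun t => ∫⁻ x in S, ∫⁻ y in T, K (y - x) * ENNReal.ofReal |v t y - v t x| :=
  ((hK.comp (measurable_snd.snd.sub measurable_snd.fst)).mul hv).lintegral_lintegral_right

theorem measurable_JK (hK : Measurable K)
    (hv : Measurable fun p : ℝ × Ed d × Ed d => ENNReal.ofReal |v p.1 p.2.2 - v p.1 p.2.1|) :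
    Measurable fun t => JK K (v t) Ω := by
  simp only [JK_eq]
  exact ((measurable_doubleIntegral_kernel hK hv Ω Ω).add
    ((measurable_doubleIntegral_kernel hK hv Ω Ωᶜ).mul_const _ |>.mul_const _)).const_mul _

variable {μ : Measure ℝ} [SFinite μ] {w : Ed d → ℝ}

theorem lintegral_doubleIntegral_kernel (hK : Measurable K)
    (hv : Measurable fun p : ℝ × Ed d × Ed d => ENNReal.ofReal |v p.1 p.2.2 - v p.1 p.2.1|)
    (hvw : ∀ x y, ∫⁻ t, ENNReal.ofReal |v t y - v t x| ∂μ = ENNReal.ofReal |w y - w x|)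
    (S T : Set (Ed d)) :
    ∫⁻ t, (∫⁻ x in S, ∫⁻ y in T, K (y - x) * ENNReal.ofReal |v t y - v t x|) ∂μ =
      ∫⁻ x in S, ∫⁻ y in T, K (y - x) * ENNReal.ofReal |w y - w x| := by
  rw [lintegral_lintegral_lintegral_comm
    (f := fun t x y => K (y - x) * ENNReal.ofReal |v t y - v t x|)
    ((hK.comp (measurable_snd.snd.sub measurable_snd.fst)).mul hv)]
  refine lintegral_congr fun x => lintegral_congr fun y => ?_
  have hvxy : Measurable fun t => ENNReal.ofReal |v t y - v t x| :=
    hv.comp (measurable_id.prodMk (measurable_const (a := (x, y))))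
  rw [lintegral_const_mul _ hvxy, hvw]

theorem lintegral_JK (hK : Measurable K)
    (hv : Measurable fun p : ℝ × Ed d × Ed d => ENNReal.ofReal |v p.1 p.2.2 - v p.1 p.2.1|)
    (hvw : ∀ x y, ∫⁻ t, ENNReal.ofReal |v t y - v t x| ∂μ = ENNReal.ofReal |w y - w x|) :
    ∫⁻ t, JK K (v t) Ω ∂μ = JK K w Ω := by
  have hΩΩ := measurable_doubleIntegral_kernel hK hv Ω Ω
  have hΩΩc := measurable_doubleIntegral_kernel hK hv Ω Ωᶜ
  simp only [JK_eq]
  rw [lintegral_const_mul' _ _ (by simp), lintegral_add_left hΩΩ,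
    lintegral_mul_const _ (hΩΩc.mul_const _), lintegral_mul_const _ hΩΩc,
    lintegral_doubleIntegral_kernel hK hv hvw, lintegral_doubleIntegral_kernel hK hv hvw]

end NonlocalEnergy

theorem exists_superlevel_perimeter_le_general
    {d : ℕ}
    (Ω : Set (Ed d))
    (K : Ed d → ℝ≥0∞) (hKmeas : Measurable K)
    (u : Ed d → ℝ) (humeas : Measurable u)
    (hu01 : ∀ x, u x ∈ Set.Icc (0 : ℝ) 1) :
    ∃ t ∈ Set.Ioo (0 : ℝ) 1, PerK K {x | t < u x} Ω ≤ JK K u Ω := by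
  have : IsProbabilityMeasure (volume.restrict (Ioo (0 : ℝ) 1)) := ⟨by simp⟩
  set v : ℝ → Ed d → ℝ := fun t => {z | t < u z}.indicator fun _ => 1
  have hlevels := measurable_ofReal_abs_indicator_superlevel_sub u humeas
  obtain ⟨t, ht, hle⟩ := exists_notMem_null_le_lintegral (μ := volume.restrict (Ioo (0 : ℝ) 1))
    (measurable_JK Ω hKmeas (v := v) hlevels).aemeasurable
    (by rw [Measure.restrict_apply' measurableSet_Ioo, compl_inter_self, measure_empty])
  exact ⟨t, not_not.mp ht, hle.trans_eq (lintegral_JK Ω hKmeas (v := v) hlevels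
    (setLIntegral_Ioo_ofReal_abs_indicator_superlevel_sub u hu01))⟩

/-- Some superlevel set of a finite-energy competitor has nonlocal perimeter bounded by the
energy of the competitor. -/
theorem exists_superlevel_perimeter_le
    {d : ℕ} (hd : 1 ≤ d)
    (Ω : Set (Ed d)) (hΩ : MeasurableSet Ω)
    (K : Ed d → ℝ≥0∞) (hKmeas : Measurable K)
    (u : Ed d → ℝ) (humeas : Measurable u)
    (hu01 : ∀ x, u x ∈ Set.Icc (0 : ℝ) 1)
    (hufin : JK K u Ω < ⊤) :
    ∃ t ∈ Set.Ioo (0 : ℝ) 1, PerK K {x | t < u x} Ω ≤ JK K u Ω :=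
  exists_superlevel_perimeter_le_general Ω K hKmeas u humeas hu01
end

section
/- Let d ≥ 1, let Ω ⊂ ℝ^d be Lebesgue measurable, let K : ℝ^d → [0,∞] be a measurable kernel, and let E₀ ⊂ ℝ^d be measurable with J_K(χ_{E₀};Ω) < ∞. Let F be the class of measurable functions v : ℝ^d → [0,1] with v = χ_{E₀} a.e. in Ω^c. If u ∈ F satisfies J_K(u;Ω) ≤ J_K(v;Ω) for all v ∈ F, then there exists t* ∈ (0,1) such that the characteristic function of the superlevel set {x : u(x) > t*} belongs to F and is also a minimiser of J_K(·;Ω) over F. -/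
open MeasureTheory ENNReal Topology RealInnerProductSpace

/-!
Layer-cake argument: for `a, b ∈ [0, 1]` one has `|b - a| = ∫₀¹ |χ_{t < b} - χ_{t < a}| dt`, so by
Tonelli the energy of `u` is the average over `t ∈ (0, 1)` of the energies of the superlevel
indicators `χ_{u > t}`. Some level `t` therefore does at least as well as `u`, and `χ_{u > t}` is
again admissible because outside `Ω` the function `u` already takes only the values `0` and `1`.
-/

open Set

lemma ofReal_abs_indicator_Iio_sub_indicator_Iio {a b : ℝ} (hab : a ≤ b) (t : ℝ) :
    ENNReal.ofReal |(Iio b).indicator (fun _ => (1 : ℝ)) t - (Iio a).indicator (fun _ => 1) t|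
      = (Ico a b).indicator 1 t := by
  rcases lt_or_ge t a with hta | hat
  · simp [hta, hta.trans_le hab, not_le.2 hta]
  · rcases lt_or_ge t b with htb | hbt
    · simp [htb, hat, not_lt.2 hat]
    · simp [not_lt.2 hbt, not_lt.2 hat]

lemma setLIntegral_Ioo_ofReal_abs_indicator_Iio_sub {a b : ℝ} (ha : a ∈ Icc (0 : ℝ) 1)
    (hb : b ∈ Icc (0 : ℝ) 1) :
    ∫⁻ t in Ioo 0 1,
        ENNReal.ofReal |(Iio b).indicator (fun _ => (1 : ℝ)) t - (Iio a).indicator (fun _ => 1) t|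
      = ENNReal.ofReal |b - a| := by
  wlog hab : a ≤ b generalizing a b
  · simp_rw [abs_sub_comm _ ((Iio a).indicator _ _), abs_sub_comm b]
    exact this hb ha (le_of_not_ge hab)
  simp_rw [ofReal_abs_indicator_Iio_sub_indicator_Iio hab]
  rw [lintegral_indicator_one measurableSet_Ico, Measure.restrict_congr_set Ioo_ae_eq_Icc,
    Measure.restrict_apply measurableSet_Ico,
    inter_eq_left.2 (Ico_subset_Icc_self.trans (Icc_subset_Icc ha.1 hb.2)), Real.volume_Ico,
    abs_of_nonneg (sub_nonneg.2 hab)]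

lemma indicator_superlevel_apply {α : Type*} (u : α → ℝ) (t : ℝ) (x : α) :
    {x | t < u x}.indicator (fun _ => (1 : ℝ)) x = (Iio (u x)).indicator (fun _ => 1) t := by
  simp [indicator_apply]

section PairEnergy

variable {α : Type*} [MeasurableSpace α] {μ ν : Measure α} {k : α → α → ℝ≥0∞} {u : α → ℝ}

noncomputable def pairEnergy (μ ν : Measure α) (k : α → α → ℝ≥0∞) (w : α → ℝ) : ℝ≥0∞ :=
  ∫⁻ x, ∫⁻ y, k x y * ENNReal.ofReal |w y - w x| ∂ν ∂μ

lemma measurable_superlevel_integrand (hk : Measurable (Function.uncurry k)) (hu : Measurable u) :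
    Measurable fun p : ℝ × α × α => k p.2.1 p.2.2 * ENNReal.ofReal
      |(Iio (u p.2.2)).indicator (fun _ => (1 : ℝ)) p.1
        - (Iio (u p.2.1)).indicator (fun _ => 1) p.1| := by
  have hI : ∀ {f : ℝ × α × α → α}, Measurable f →
      Measurable fun p : ℝ × α × α => (Iio (u (f p))).indicator (fun _ => (1 : ℝ)) p.1 :=
    fun hf => measurable_const.indicator (measurableSet_lt measurable_fst (hu.comp hf))
  exact (hk.comp measurable_snd).mul
    ((hI measurable_snd.snd).sub (hI measurable_snd.fst)).abs.ennreal_ofReal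

lemma measurable_pairEnergy_superlevel [SFinite μ] [SFinite ν]
    (hk : Measurable (Function.uncurry k)) (hu : Measurable u) :
    Measurable fun t : ℝ => pairEnergy μ ν k ({x | t < u x}.indicator fun _ => 1) := by
  simp_rw [pairEnergy, indicator_superlevel_apply]
  exact ((measurable_superlevel_integrand hk hu).comp (measurable_fst.fst.prodMk
    (measurable_fst.snd.prodMk measurable_snd))).lintegral_prod_right'.lintegral_prod_right'

theorem lintegral_pairEnergy_superlevel [SFinite μ] [SFinite ν]
    (hk : Measurable (Function.uncurry k)) (hu : Measurable u) (hu01 : ∀ x, u x ∈ Icc (0 : ℝ) 1) :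
    ∫⁻ t in Ioo 0 1, pairEnergy μ ν k ({x | t < u x}.indicator fun _ => 1)
      = pairEnergy μ ν k u := by
  have hF := measurable_superlevel_integrand hk hu
  simp_rw [pairEnergy, indicator_superlevel_apply]
  rw [lintegral_lintegral_swap]
  swap
  · exact ((hF.comp (f := fun q : (ℝ × α) × α => (q.1.1, q.1.2, q.2)) (by fun_prop))
      |>.lintegral_prod_right').aemeasurable
  refine lintegral_congr fun x => ?_
  rw [lintegral_lintegral_swap]
  swap
  · exact (hF.comp (f := fun q : ℝ × α => (q.1, x, q.2)) (by fun_prop)).aemeasurable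
  refine lintegral_congr fun y => ?_
  have hlayer : Measurable fun t : ℝ => ENNReal.ofReal
      |(Iio (u y)).indicator (fun _ => (1 : ℝ)) t - (Iio (u x)).indicator (fun _ => 1) t| :=
    ((measurable_const.indicator measurableSet_Iio).sub
      (measurable_const.indicator measurableSet_Iio)).abs.ennreal_ofReal
  rw [lintegral_const_mul _ hlayer, setLIntegral_Ioo_ofReal_abs_indicator_Iio_sub (hu01 x) (hu01 y)]

end PairEnergy

lemma Measurable.uncurry_apply_sub {G β : Type*} [MeasurableSpace G] [Sub G] [MeasurableSub₂ G]
    [MeasurableSpace β] {K : G → β} (hK : Measurable K) :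
    Measurable (Function.uncurry fun x y : G => K (y - x)) :=
  hK.comp (measurable_snd.sub measurable_fst)

/-- `∫⁻` extends as far to the right as possible, so the second summand in `JK` lies inside the
integral over `y ∈ Ω`, which multiplies it by `volume Ω * volume Ω`. -/
lemma JK_eq_pairEnergy {d : ℕ} (K : Ed d → ℝ≥0∞) (w : Ed d → ℝ) (Ω : Set (Ed d)) :
    JK K w Ω = 1 / 2 *
      (pairEnergy (volume.restrict Ω) (volume.restrict Ω) (fun x y => K (y - x)) w
      + pairEnergy (volume.restrict Ω) (volume.restrict Ωᶜ) (fun x y => K (y - x)) w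
        * (volume Ω * volume Ω)) := by
  simp only [JK, pairEnergy]
  congr 1
  simp_rw [lintegral_add_right _ measurable_const, setLIntegral_const]
  rw [mul_assoc]

section JK

variable {d : ℕ} {K : Ed d → ℝ≥0∞} {u : Ed d → ℝ} {Ω : Set (Ed d)}

lemma measurable_JK_superlevel (hK : Measurable K) (hu : Measurable u) :
    Measurable fun t : ℝ => JK K ({x | t < u x}.indicator fun _ => 1) Ω := by
  have hk := hK.uncurry_apply_sub
  simp_rw [JK_eq_pairEnergy]
  exact ((measurable_pairEnergy_superlevel hk hu).add
    ((measurable_pairEnergy_superlevel hk hu).mul_const _)).const_mul _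

theorem lintegral_JK_superlevel (hK : Measurable K) (hu : Measurable u)
    (hu01 : ∀ x, u x ∈ Icc (0 : ℝ) 1) :
    ∫⁻ t in Ioo 0 1, JK K ({x | t < u x}.indicator fun _ => 1) Ω = JK K u Ω := by
  have hk := hK.uncurry_apply_sub
  simp_rw [JK_eq_pairEnergy]
  rw [lintegral_const_mul' _ _ (by simp),
    lintegral_add_left (measurable_pairEnergy_superlevel hk hu),
    lintegral_mul_const _ (measurable_pairEnergy_superlevel hk hu),
    lintegral_pairEnergy_superlevel hk hu hu01, lintegral_pairEnergy_superlevel hk hu hu01]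

end JK

lemma exists_mem_le_setLIntegral {α : Type*} [MeasurableSpace α] {μ : Measure α} {s : Set α}
    {f : α → ℝ≥0∞} (hs : MeasurableSet s) (hμs : μ s = 1) (hf : AEMeasurable f (μ.restrict s)) :
    ∃ x ∈ s, f x ≤ ∫⁻ x in s, f x ∂μ := by
  have : IsProbabilityMeasure (μ.restrict s) := ⟨by simp [hμs]⟩
  obtain ⟨x, hx, hfx⟩ := exists_notMem_null_le_lintegral hf (ae_iff.1 (ae_restrict_mem hs))
  exact ⟨x, not_not.1 hx, hfx⟩

lemma indicator_superlevel_eq_indicator {α : Type*} {u : α → ℝ} {E : Set α} {t : ℝ} {x : α}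
    (ht : t ∈ Ioo (0 : ℝ) 1) (hx : u x = E.indicator (fun _ => 1) x) :
    {x | t < u x}.indicator (fun _ => (1 : ℝ)) x = E.indicator (fun _ => 1) x := by
  by_cases hxE : x ∈ E
  · simp [hxE, hx, ht.2]
  · simp [hxE, hx, not_lt.2 ht.1.le]

theorem exists_superlevel_minimiser_general
    {d : ℕ}
    (Ω : Set (Ed d))
    (K : Ed d → ℝ≥0∞) (hKmeas : Measurable K)
    (E₀ : Set (Ed d))
    (u : Ed d → ℝ) (humeas : Measurable u)
    (hu01 : ∀ x, u x ∈ Set.Icc (0 : ℝ) 1)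
    (hubc : ∀ᵐ x ∂(volume : Measure (Ed d)),
      x ∈ Ωᶜ → u x = (E₀.indicator (fun _ => (1 : ℝ))) x)
    (humin : ∀ v : Ed d → ℝ, Measurable v → (∀ x, v x ∈ Set.Icc (0 : ℝ) 1) →
      (∀ᵐ x ∂(volume : Measure (Ed d)),
        x ∈ Ωᶜ → v x = (E₀.indicator (fun _ => (1 : ℝ))) x) →
      JK K u Ω ≤ JK K v Ω) :
    ∃ t ∈ Set.Ioo (0 : ℝ) 1,
      (∀ᵐ x ∂(volume : Measure (Ed d)),
        x ∈ Ωᶜ → ({x | t < u x}.indicator (fun _ => (1 : ℝ))) x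
          = (E₀.indicator (fun _ => (1 : ℝ))) x) ∧
      (∀ v : Ed d → ℝ, Measurable v → (∀ x, v x ∈ Set.Icc (0 : ℝ) 1) →
        (∀ᵐ x ∂(volume : Measure (Ed d)),
          x ∈ Ωᶜ → v x = (E₀.indicator (fun _ => (1 : ℝ))) x) →
        JK K ({x | t < u x}.indicator (fun _ => (1 : ℝ))) Ω ≤ JK K v Ω) := by
  have hunit : volume (Ioo (0 : ℝ) 1) = 1 := by simp [Real.volume_Ioo]
  obtain ⟨t, ht, hle⟩ := exists_mem_le_setLIntegral measurableSet_Ioo hunit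
    (measurable_JK_superlevel (Ω := Ω) hKmeas humeas).aemeasurable
  rw [lintegral_JK_superlevel hKmeas humeas hu01] at hle
  refine ⟨t, ht, ?_, fun v hv hv01 hvbc => hle.trans (humin v hv hv01 hvbc)⟩
  filter_upwards [hubc] with x hx hxΩ
  exact indicator_superlevel_eq_indicator ht (hx hxΩ)

/-- If `u` minimises the nonlocal Plateau problem, then the characteristic function of one of
its superlevel sets is an admissible competitor which is also a minimiser. -/
theorem exists_superlevel_minimiser
    {d : ℕ} (hd : 1 ≤ d)
    (Ω : Set (Ed d)) (hΩ : MeasurableSet Ω)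
    (K : Ed d → ℝ≥0∞) (hKmeas : Measurable K)
    (E₀ : Set (Ed d)) (hE₀ : MeasurableSet E₀)
    (hE₀fin : JK K (E₀.indicator (fun _ => (1 : ℝ))) Ω < ⊤)
    (u : Ed d → ℝ) (humeas : Measurable u)
    (hu01 : ∀ x, u x ∈ Set.Icc (0 : ℝ) 1)
    (hubc : ∀ᵐ x ∂(volume : Measure (Ed d)),
      x ∈ Ωᶜ → u x = (E₀.indicator (fun _ => (1 : ℝ))) x)
    (humin : ∀ v : Ed d → ℝ, Measurable v → (∀ x, v x ∈ Set.Icc (0 : ℝ) 1) →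
      (∀ᵐ x ∂(volume : Measure (Ed d)),
        x ∈ Ωᶜ → v x = (E₀.indicator (fun _ => (1 : ℝ))) x) →
      JK K u Ω ≤ JK K v Ω) :
    ∃ t ∈ Set.Ioo (0 : ℝ) 1,
      (∀ᵐ x ∂(volume : Measure (Ed d)),
        x ∈ Ωᶜ → ({x | t < u x}.indicator (fun _ => (1 : ℝ))) x
          = (E₀.indicator (fun _ => (1 : ℝ))) x) ∧
      (∀ v : Ed d → ℝ, Measurable v → (∀ x, v x ∈ Set.Icc (0 : ℝ) 1) →
        (∀ᵐ x ∂(volume : Measure (Ed d)),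
          x ∈ Ωᶜ → v x = (E₀.indicator (fun _ => (1 : ℝ))) x) →
        JK K ({x | t < u x}.indicator (fun _ => (1 : ℝ))) Ω ≤ JK K v Ω) :=
  exists_superlevel_minimiser_general Ω K hKmeas E₀ u humeas hu01 hubc humin
end
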